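/- Assume ε·λ_max(L_s + D_ω) < 2 and ε·K·(ρ^max + d_ω^max) < 1. Let U_0 ∈ Σ and let S ∈ Σ̄ be a binary matrix satisfying ⟨∇E(U_0), S⟩ ≤ ⟨∇E(U_0), Z⟩ for all Z ∈ Σ (such a binary minimizer exists). Then: (a) E(S) ≤ E(U_0), with strict inequality E(S) < E(U_0) if S ≠ U_0; and (b) S is a stationary point of the problem of minimizing E over Σ, i.e., ⟨∇E(S), Z − S⟩ ≥ 0 for all Z ∈ Σ. In particular, one step of the Frank–Wolfe method from U_0 reaches a stationary point (one-shot convergence). -/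

import Mathlib

open Matrix

noncomputable section

/-- The unit simplex `Δ` in `ℝ^K`. -/
def unitSimplex (K : ℕ) : Set (Fin K → ℝ) :=
  {y | (∀ j, 0 ≤ y j) ∧ ∑ j, y j = 1}

/-- `Σ`: matrices in `ℝ^{n×K}` each of whose rows lies in the unit simplex. -/
def SigmaSet (n K : ℕ) : Set (Matrix (Fin n) (Fin K) ℝ) :=
  {U | ∀ i, U i ∈ unitSimplex K}

/-- `Σ̄`: binary matrices in `Σ`. -/
def SigmaBar (n K : ℕ) : Set (Matrix (Fin n) (Fin K) ℝ) :=
  {U | U ∈ SigmaSet n K ∧ ∀ i j, U i j = 0 ∨ U i j = 1}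

/-- Frobenius inner product `⟨A,B⟩ = trace(AᵀB)`. -/
def frobInner {n K : ℕ} (A B : Matrix (Fin n) (Fin K) ℝ) : ℝ :=
  Matrix.trace (Aᵀ * B)

/-- Frobenius norm. -/
def frobNorm {n K : ℕ} (A : Matrix (Fin n) (Fin K) ℝ) : ℝ :=
  Real.sqrt (∑ i, ∑ j, (A i j) ^ 2)

/-- The energy
`E(U) = (1/2)·trace(Uᵀ Lₛ U) + (1/ε)·Σᵢ uᵢᵀ(𝟙 − uᵢ) + (1/2)·Σᵢ ωᵢ‖ûᵢ − uᵢ‖²`. -/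
def En {n K : ℕ} (Ls : Matrix (Fin n) (Fin n) ℝ) (ω : Fin n → ℝ)
    (Uhat : Matrix (Fin n) (Fin K) ℝ) (ε : ℝ) (U : Matrix (Fin n) (Fin K) ℝ) : ℝ :=
  (1 / 2) * Matrix.trace (Uᵀ * Ls * U)
    + (1 / ε) * ∑ i, ∑ j, U i j * (1 - U i j)
    + (1 / 2) * ∑ i, ω i * ∑ j, (Uhat i j - U i j) ^ 2

/-- The gradient `∇E(U) = Lₛ U + (1/ε)(J − 2U) − D_ω(Û − U)` (`J` the all-ones matrix). -/
def gradE {n K : ℕ} (Ls : Matrix (Fin n) (Fin n) ℝ) (ω : Fin n → ℝ)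
    (Uhat : Matrix (Fin n) (Fin K) ℝ) (ε : ℝ) (U : Matrix (Fin n) (Fin K) ℝ) :
    Matrix (Fin n) (Fin K) ℝ :=
  Ls * U + (1 / ε) • (Matrix.of (fun _ _ => (1 : ℝ)) - 2 • U)
    - Matrix.diagonal ω * (Uhat - U)

/-! The energy is a quadratic with Hessian `Lₛ + D_ω - (2/ε) I`, which is negative definite when
`ε λ_max < 2`; hence `E` lies below its tangent plane at `U₀`, and the Frank–Wolfe vertex `S`, which
minimizes that tangent plane over `Σ`, has `E(S) ≤ E(U₀)`, strictly unless `S = U₀`.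
At a binary `S` the concave penalty dominates the gradient: in row `i`, the entry of `∇E(S)` at the
`1` of `S` is at most `ρ + d - 1/ε`, and every other entry is at least `1/ε - ρ - d`. So once
`ε (ρ + d) ≤ 1`, `S` minimizes `⟨∇E(S), ·⟩` over `Σ`, which is stationarity. -/

-- `unitSimplex K` is `stdSimplex ℝ (Fin K)` by definition, so the simplex lemmas are stated for
-- the latter and applied to the former.
theorem exists_eq_single_of_mem_stdSimplex {ι : Type*} [Fintype ι] [DecidableEq ι] {y : ι → ℝ}
    (hy : y ∈ stdSimplex ℝ ι) (hbin : ∀ j, y j = 0 ∨ y j = 1) : ∃ j, y = Pi.single j 1 := by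
  obtain ⟨hnonneg, hsum⟩ := hy
  obtain ⟨j, hj⟩ : ∃ j, y j = 1 := by
    by_contra! h
    simp [fun j => (hbin j).resolve_right (h j)] at hsum
  have hrest : ∑ k ∈ Finset.univ.erase j, y k = 0 := by
    linarith [Finset.add_sum_erase Finset.univ y (Finset.mem_univ j)]
  refine ⟨j, funext fun k => ?_⟩
  rcases eq_or_ne k j with rfl | hk
  · simp [hj]
  · rw [Pi.single_eq_of_ne hk]
    exact (Finset.sum_eq_zero_iff_of_nonneg fun k _ => hnonneg k).mp hrest k
      (Finset.mem_erase.mpr ⟨hk, Finset.mem_univ k⟩)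

theorem le_dotProduct_of_mem_stdSimplex {ι : Type*} [Fintype ι] {y c : ι → ℝ} {j₀ : ι}
    (hy : y ∈ stdSimplex ℝ ι) (hc : ∀ j, c j₀ ≤ c j) : c j₀ ≤ c ⬝ᵥ y :=
  calc c j₀ = ∑ j, c j₀ * y j := by rw [← Finset.mul_sum, hy.2, mul_one]
    _ ≤ c ⬝ᵥ y := Finset.sum_le_sum fun j _ => mul_le_mul_of_nonneg_right (hc j) (hy.1 j)

theorem abs_mul_apply_le_sum_abs {l m k : Type*} [Fintype m] {A : Matrix l m ℝ}
    {B : Matrix m k ℝ} (hB : ∀ i j, |B i j| ≤ 1) (i : l) (j : k) :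
    |(A * B) i j| ≤ ∑ r, |A i r| :=
  calc |(A * B) i j| ≤ ∑ r, |A i r * B r j| := Finset.abs_sum_le_sum_abs _ _
    _ ≤ ∑ r, |A i r| := Finset.sum_le_sum fun r _ => by
        rw [abs_mul]; exact mul_le_of_le_one_right (abs_nonneg _) (hB r j)

theorem Matrix.IsHermitian.trace_transpose_mul_mul_le {m k : Type*} [Fintype m] [DecidableEq m]
    [Fintype k] {H : Matrix m m ℝ} (hH : H.IsHermitian) {lam : ℝ}
    (hlam : ∀ i, hH.eigenvalues i ≤ lam) (V : Matrix m k ℝ) :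
    (Vᵀ * H * V).trace ≤ lam * (Vᵀ * V).trace := by
  open scoped MatrixOrder in
  have hle : H ≤ algebraMap ℝ _ lam := le_algebraMap_of_spectrum_le (fun x hx => by
    obtain ⟨i, rfl⟩ := hH.spectrum_real_eq_range_eigenvalues ▸ hx
    exact hlam i) hH
  have := ((Matrix.le_iff.mp hle).conjTranspose_mul_mul_same V).trace_nonneg
  simp only [conjTranspose_eq_transpose_of_trivial, Algebra.algebraMap_eq_smul_one, Matrix.mul_sub,
    Matrix.sub_mul, Matrix.mul_smul, Matrix.smul_mul, Matrix.mul_one, trace_sub, trace_smul,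
    smul_eq_mul] at this
  linarith

theorem Matrix.IsSymm.trace_transpose_mul_mul_comm {m k : Type*} [Fintype m] [Fintype k]
    {A : Matrix m m ℝ} (hA : A.IsSymm) (X Y : Matrix m k ℝ) :
    (Xᵀ * A * Y).trace = (Yᵀ * A * X).trace := by
  rw [← trace_transpose, transpose_mul, transpose_mul, transpose_transpose, hA.eq,
    Matrix.mul_assoc]

theorem trace_transpose_mul_eq_sum {l m : Type*} [Fintype l] [Fintype m] (A B : Matrix l m ℝ) :
    (Aᵀ * B).trace = ∑ i, ∑ j, A i j * B i j := by
  simp only [trace, diag, mul_apply, transpose_apply]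
  exact Finset.sum_comm

section Frobenius

variable {n K : ℕ}

theorem frobInner_eq_sum_dotProduct (A B : Matrix (Fin n) (Fin K) ℝ) :
    frobInner A B = ∑ i, A i ⬝ᵥ B i :=
  trace_transpose_mul_eq_sum A B

theorem frobInner_sub_right (G A B : Matrix (Fin n) (Fin K) ℝ) :
    frobInner G (A - B) = frobInner G A - frobInner G B := by
  simp only [frobInner, Matrix.mul_sub, trace_sub]

theorem frobInner_self_nonneg (V : Matrix (Fin n) (Fin K) ℝ) : 0 ≤ frobInner V V := by
  simpa [frobInner] using (posSemidef_conjTranspose_mul_self V).trace_nonneg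

theorem frobInner_self_pos {V : Matrix (Fin n) (Fin K) ℝ} (hV : V ≠ 0) : 0 < frobInner V V := by
  refine (frobInner_self_nonneg V).lt_of_ne' ?_
  simpa [frobInner] using (trace_conjTranspose_mul_self_eq_zero_iff (A := V)).not.mpr hV

theorem frobInner_sub_nonneg_of_row_eq_single {G S Z : Matrix (Fin n) (Fin K) ℝ}
    {σ : Fin n → Fin K} (hS : ∀ i, S i = Pi.single (σ i) 1) (hG : ∀ i j, G i (σ i) ≤ G i j)
    (hZ : Z ∈ SigmaSet n K) : 0 ≤ frobInner G (Z - S) := by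
  rw [frobInner_eq_sum_dotProduct]
  refine Finset.sum_nonneg fun i _ => ?_
  change 0 ≤ G i ⬝ᵥ (Z i - S i)
  rw [dotProduct_sub, hS i, dotProduct_single, mul_one, sub_nonneg]
  exact le_dotProduct_of_mem_stdSimplex (hZ i) (hG i)

end Frobenius

section Energy

variable {n K : ℕ} {Ls : Matrix (Fin n) (Fin n) ℝ} {ω : Fin n → ℝ}
  {Uhat : Matrix (Fin n) (Fin K) ℝ} {ε : ℝ}

theorem gradE_apply (U : Matrix (Fin n) (Fin K) ℝ) (i : Fin n) (j : Fin K) :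
    gradE Ls ω Uhat ε U i j
      = (Ls * U) i j + ε⁻¹ * (1 - 2 * U i j) - ω i * (Uhat i j - U i j) := by
  simp [gradE, diagonal_mul]

theorem En_eq_trace (U : Matrix (Fin n) (Fin K) ℝ) :
    En Ls ω Uhat ε U = (1 / 2) * (Uᵀ * Ls * U).trace
      + (1 / ε) * ((of fun _ _ => 1 : Matrix (Fin n) (Fin K) ℝ)ᵀ * U).trace
      - (1 / ε) * (Uᵀ * U).trace
      + (1 / 2) * ((Uhat - U)ᵀ * diagonal ω * (Uhat - U)).trace := by
  simp only [En, Matrix.mul_assoc _ (diagonal ω), trace_transpose_mul_eq_sum, diagonal_mul,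
    of_apply, one_mul]
  have hpenalty : ∑ i, ∑ j, U i j * (1 - U i j) = ∑ i, ∑ j, U i j - ∑ i, ∑ j, U i j * U i j := by
    simp only [mul_sub, mul_one, Finset.sum_sub_distrib]
  have hfidelity : ∑ i, ω i * ∑ j, (Uhat i j - U i j) ^ 2
      = ∑ i, ∑ j, (Uhat - U) i j * (ω i * (Uhat - U) i j) := by
    simp only [Finset.mul_sum, Matrix.sub_apply]
    exact Finset.sum_congr rfl fun i _ => Finset.sum_congr rfl fun j _ => by ring
  rw [hpenalty, hfidelity]
  ring

theorem En_add (hLs : Ls.IsSymm) (U V : Matrix (Fin n) (Fin K) ℝ) :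
    En Ls ω Uhat ε (U + V) = En Ls ω Uhat ε U + frobInner (gradE Ls ω Uhat ε U) V
      + (1 / 2) * (Vᵀ * (Ls + diagonal ω) * V).trace - (1 / ε) * (Vᵀ * V).trace := by
  rw [En_eq_trace, En_eq_trace, frobInner, gradE, show Uhat - (U + V) = (Uhat - U) - V by abel]
  simp only [transpose_add, transpose_sub, transpose_smul, transpose_mul, Matrix.add_mul,
    Matrix.mul_add, Matrix.sub_mul, Matrix.mul_sub, Matrix.smul_mul, trace_add, trace_sub,
    trace_smul, smul_eq_mul, hLs.eq, diagonal_transpose, Matrix.mul_assoc, two_smul]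
  have hLsUV := hLs.trace_transpose_mul_mul_comm U V
  have hDUhatV := (isSymm_diagonal ω).trace_transpose_mul_mul_comm Uhat V
  have hDUV := (isSymm_diagonal ω).trace_transpose_mul_mul_comm U V
  have hUV : (Uᵀ * V).trace = (Vᵀ * U).trace := by
    rw [← trace_transpose, transpose_mul, transpose_transpose]
  simp only [Matrix.mul_assoc] at hLsUV hDUhatV hDUV
  linear_combination (-(1 : ℝ) / 2) * hLsUV + (1 / ε) * hUV + (1 / 2) * hDUhatV - (1 / 2) * hDUV

theorem En_add_le (hLs : Ls.IsSymm) (hH : (Ls + diagonal ω).IsHermitian) {lam : ℝ}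
    (hlam : ∀ i, hH.eigenvalues i ≤ lam) (U V : Matrix (Fin n) (Fin K) ℝ) :
    En Ls ω Uhat ε (U + V) ≤ En Ls ω Uhat ε U + frobInner (gradE Ls ω Uhat ε U) V
      + (lam / 2 - 1 / ε) * frobInner V V := by
  rw [En_add hLs]
  unfold frobInner
  linarith [hH.trace_transpose_mul_mul_le hlam V]

theorem gradE_apply_le_of_row_eq_single {i : Fin n} (hε : 0 < ε) (hω : 0 ≤ ω i)
    (hUhat : Uhat i ∈ unitSimplex K) {S : Matrix (Fin n) (Fin K) ℝ} (hS : S ∈ SigmaSet n K)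
    {σ : Fin K} (hSi : S i = Pi.single σ 1) (hrow : ε * (∑ k, |Ls i k| + ω i) ≤ 1) (j : Fin K) :
    gradE Ls ω Uhat ε S i σ ≤ gradE Ls ω Uhat ε S i j := by
  rcases eq_or_ne j σ with rfl | hj
  · exact le_rfl
  have hSσ : S i σ = 1 := by simp [hSi]
  have hSj : S i j = 0 := by simp [hSi, hj]
  have hLsS : ∀ j, |(Ls * S) i j| ≤ ∑ k, |Ls i k| := abs_mul_apply_le_sum_abs (fun k j => by
    obtain ⟨h0, h1⟩ := mem_Icc_of_mem_stdSimplex (hS k) j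
    exact abs_le.mpr ⟨by linarith, h1⟩) i
  have hUσ := mem_Icc_of_mem_stdSimplex hUhat σ
  have hUj := mem_Icc_of_mem_stdSimplex hUhat j
  have hrow' : ∑ k, |Ls i k| + ω i ≤ ε⁻¹ := by
    rw [← one_div, le_div_iff₀ hε]
    linarith
  rw [gradE_apply, gradE_apply, hSσ, hSj]
  linarith [abs_le.mp (hLsS σ), abs_le.mp (hLsS j), mul_nonneg hω hUσ.1,
    mul_le_of_le_one_right hω hUj.2]

end Energy

theorem one_shot_frank_wolfe_general (n K : ℕ) (hK : 2 ≤ K)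
    (Ls : Matrix (Fin n) (Fin n) ℝ) (hLs : Ls.PosSemidef)
    (ω : Fin n → ℝ) (hω : ∀ i, 0 ≤ ω i)
    (Uhat : Matrix (Fin n) (Fin K) ℝ) (hUhat : Uhat ∈ SigmaSet n K)
    (ε : ℝ) (hε : 0 < ε)
    (hH : (Ls + Matrix.diagonal ω).IsHermitian)
    (lam : ℝ) (hlam : IsGreatest (Set.range hH.eigenvalues) lam)
    (h1 : ε * lam < 2)
    (ρmax : ℝ) (hρ : IsGreatest (Set.range fun i => ∑ j, |Ls i j|) ρmax)
    (dmax : ℝ) (hd : IsGreatest (Set.range ω) dmax)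
    (h2 : ε * K * (ρmax + dmax) < 1)
    (U0 : Matrix (Fin n) (Fin K) ℝ) (hU0 : U0 ∈ SigmaSet n K)
    (S : Matrix (Fin n) (Fin K) ℝ) (hSbar : S ∈ SigmaBar n K)
    (hSmin : ∀ Z ∈ SigmaSet n K,
      frobInner (gradE Ls ω Uhat ε U0) S ≤ frobInner (gradE Ls ω Uhat ε U0) Z) :
    (∃ S' ∈ SigmaBar n K, ∀ Z ∈ SigmaSet n K,
      frobInner (gradE Ls ω Uhat ε U0) S' ≤ frobInner (gradE Ls ω Uhat ε U0) Z) ∧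
    En Ls ω Uhat ε S ≤ En Ls ω Uhat ε U0 ∧
    (S ≠ U0 → En Ls ω Uhat ε S < En Ls ω Uhat ε U0) ∧
    (∀ Z ∈ SigmaSet n K, 0 ≤ frobInner (gradE Ls ω Uhat ε S) (Z - S)) := by
  obtain ⟨hS, hbin⟩ := hSbar
  have hdescent := En_add_le (Uhat := Uhat) (ε := ε)
    (isHermitian_iff_isSymm.mp hLs.isHermitian) hH (fun i => hlam.2 ⟨i, rfl⟩) U0 (S - U0)
  rw [add_sub_cancel] at hdescent
  have hstep : frobInner (gradE Ls ω Uhat ε U0) (S - U0) ≤ 0 := by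
    linarith [frobInner_sub_right (gradE Ls ω Uhat ε U0) S U0, hSmin U0 hU0]
  have hcoef : lam / 2 - 1 / ε < 0 := by
    rw [sub_neg, div_lt_div_iff₀ two_pos hε]
    linarith
  have hrow : ∀ i, ε * (∑ k, |Ls i k| + ω i) ≤ 1 := fun i => by
    have hK1 : (1 : ℝ) ≤ K := by exact_mod_cast one_le_two.trans hK
    have hle : ∑ k, |Ls i k| + ω i ≤ ρmax + dmax := add_le_add (hρ.2 ⟨i, rfl⟩) (hd.2 ⟨i, rfl⟩)
    have hnonneg : 0 ≤ ∑ k, |Ls i k| + ω i :=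
      add_nonneg (Finset.sum_nonneg fun k _ => abs_nonneg _) (hω i)
    calc ε * (∑ k, |Ls i k| + ω i) ≤ ε * K * (∑ k, |Ls i k| + ω i) := by
          nlinarith [mul_nonneg hε.le hnonneg]
      _ ≤ ε * K * (ρmax + dmax) := by gcongr
      _ ≤ 1 := h2.le
  choose σ hσ using fun i => exists_eq_single_of_mem_stdSimplex (hS i) (hbin i)
  refine ⟨⟨S, ⟨hS, hbin⟩, hSmin⟩, ?_, fun hne => ?_, fun Z hZ => ?_⟩
  · linarith [mul_nonpos_of_nonpos_of_nonneg hcoef.le (frobInner_self_nonneg (S - U0))]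
  · linarith [mul_neg_of_neg_of_pos hcoef (frobInner_self_pos (sub_ne_zero.mpr hne))]
  · exact frobInner_sub_nonneg_of_row_eq_single hσ (fun i =>
      gradE_apply_le_of_row_eq_single hε (hω i) (hUhat i) hS (hσ i) (hrow i)) hZ

/-- one-shot convergence of Frank–Wolfe: under `ε·λ_max(Lₛ + D_ω) < 2` and
`ε·K·(ρ^max + d_ω^max) < 1`, a binary LMO output `S` from `U₀` exists, decreases `E`
(strictly if `S ≠ U₀`), and is a stationary point of the minimization of `E` over `Σ`. -/
theorem one_shot_frank_wolfe (n K : ℕ) (hn : 1 ≤ n) (hK : 2 ≤ K)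
    (Ls : Matrix (Fin n) (Fin n) ℝ) (hLs : Ls.PosSemidef)
    (ω : Fin n → ℝ) (hω : ∀ i, 0 ≤ ω i)
    (Uhat : Matrix (Fin n) (Fin K) ℝ) (hUhat : Uhat ∈ SigmaSet n K)
    (ε : ℝ) (hε : 0 < ε)
    (hH : (Ls + Matrix.diagonal ω).IsHermitian)
    (lam : ℝ) (hlam : IsGreatest (Set.range hH.eigenvalues) lam)
    (h1 : ε * lam < 2)
    (ρmax : ℝ) (hρ : IsGreatest (Set.range fun i => ∑ j, |Ls i j|) ρmax)
    (dmax : ℝ) (hd : IsGreatest (Set.range ω) dmax)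
    (h2 : ε * K * (ρmax + dmax) < 1)
    (U0 : Matrix (Fin n) (Fin K) ℝ) (hU0 : U0 ∈ SigmaSet n K)
    (S : Matrix (Fin n) (Fin K) ℝ) (hSbar : S ∈ SigmaBar n K)
    (hSmin : ∀ Z ∈ SigmaSet n K,
      frobInner (gradE Ls ω Uhat ε U0) S ≤ frobInner (gradE Ls ω Uhat ε U0) Z) :
    (∃ S' ∈ SigmaBar n K, ∀ Z ∈ SigmaSet n K,
      frobInner (gradE Ls ω Uhat ε U0) S' ≤ frobInner (gradE Ls ω Uhat ε U0) Z) ∧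
    En Ls ω Uhat ε S ≤ En Ls ω Uhat ε U0 ∧
    (S ≠ U0 → En Ls ω Uhat ε S < En Ls ω Uhat ε U0) ∧
    (∀ Z ∈ SigmaSet n K, 0 ≤ frobInner (gradE Ls ω Uhat ε S) (Z - S)) :=
  one_shot_frank_wolfe_general n K hK Ls hLs ω hω Uhat hUhat ε hε hH lam hlam h1 ρmax hρ dmax hd h2
    U0 hU0 S hSbar hSmin
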